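/- Let λ, μ ∈ (0,1) and n ∈ ℕ. Define a_j^{(λ,μ)} := 0 for integers j < 0 and a_j^{(λ,μ)} := √λ · μ^{j/2} · L_j^{(−1)}(−ln λ) for integers j ≥ 0, and let T^{(n)} be the n×n Toeplitz matrix with entries T^{(n)}_{i,k} = a_{i−k}^{(λ,μ)}. Then every singular value s of T^{(n)} satisfies s² ≤ λ^{(1−√μ)/(1+√μ)}. -/

import Mathlib

open MeasureTheory

noncomputable def singularValues {n : ℕ} (A : Matrix (Fin n) (Fin n) ℂ) : Fin n → ℝ :=
  fun i => Real.sqrt ((Matrix.isHermitian_conjTranspose_mul_self A).eigenvalues i)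

/-- Generalised Laguerre polynomial `L_m^{(-1)}`. -/
noncomputable def lagM1 (m : ℕ) (x : ℝ) : ℝ :=
  if m = 0 then 1
  else ∑ l ∈ Finset.Icc 1 m, (Nat.choose (m - 1) (l - 1) : ℝ) * (-x) ^ l / (Nat.factorial l : ℝ)

/-- The sequence `a_j^{(λ,μ)}`, extended by zero to negative indices. -/
noncomputable def aInt (lam mu : ℝ) (j : ℤ) : ℝ :=
  if j < 0 then 0
  else Real.sqrt lam * mu ^ ((j : ℝ) / 2) * lagM1 j.toNat (-Real.log lam)

/-- The Toeplitz matrix built from the sequence `a^{(λ,μ)}`. -/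
noncomputable def toepA (lam mu : ℝ) (n : ℕ) : Matrix (Fin n) (Fin n) ℂ :=
  Matrix.of fun i k => ((aInt lam mu (((i : ℕ) : ℤ) - ((k : ℕ) : ℤ)) : ℝ) : ℂ)

/-!
Write `t = √μ`, let `S` be the lower shift, `M = tS`, and `K = M (1 - M)⁻¹`, the strictly
lower triangular Toeplitz matrix with entries `t ^ (i - k)`. Since
`∑ₘ L_m^{(-1)}(x) zᵐ = exp (-x z / (1 - z))`, the Toeplitz matrix is `T = √λ · exp (ln λ · K)`.

Substituting `v = (1 - M) u` turns `Re ⟪K v, v⟫` into `Re ⟪M u, u - M u⟫`, and `‖M u‖ ≤ t ‖u‖`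
gives `Re ⟪K v, v⟫ ≥ -(t / (1 + t)) ‖v‖²`. So `-K` is dissipative, and differentiating
`e^{-2ωs} ‖exp (-s K) v‖²` gives `‖exp (-s K)‖ ≤ e^{ωs}` for `s = -ln λ ≥ 0`, `ω = t / (1 + t)`.
Every singular value is at most `‖T‖`, whence `s_i² ≤ λ · λ^{-2t/(1+t)} = λ^{(1-t)/(1+t)}`.
-/

open Finset

theorem Nat.sum_range_choose_eq_choose_add_one (N r : ℕ) :
    ∑ d ∈ range N, d.choose r = N.choose (r + 1) := by
  induction N with
  | zero => simp
  | succ N ih => rw [sum_range_succ, ih, Nat.choose_succ_succ' N r, Nat.add_comm]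

theorem sq_sqrt_mul_exp_mul_neg_log {x : ℝ} (hx : 0 < x) (c : ℝ) :
    (Real.sqrt x * Real.exp (c * -Real.log x)) ^ 2 = x ^ (1 - 2 * c) := by
  rw [mul_pow, Real.sq_sqrt hx.le, ← Real.exp_nat_mul, Real.rpow_def_of_pos hx]
  nth_rewrite 1 [← Real.exp_log hx]
  rw [← Real.exp_add]
  ring_nf

theorem NormedSpace.exp_eq_sum_range_of_pow_eq_zero (𝕂 : Type*) {𝔸 : Type*} [Field 𝕂] [CharZero 𝕂]
    [Ring 𝔸] [Algebra 𝕂 𝔸] [TopologicalSpace 𝔸] [IsTopologicalRing 𝔸] [T2Space 𝔸]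
    {x : 𝔸} {n : ℕ} (hx : x ^ n = 0) :
    NormedSpace.exp x = ∑ l ∈ Finset.range n, ((l.factorial : 𝕂)⁻¹) • x ^ l := by
  rw [NormedSpace.exp_eq_tsum 𝕂]
  exact tsum_eq_sum fun l hl => by
    rw [pow_eq_zero_of_le (not_lt.1 (Finset.mem_range.not.1 hl)) hx, smul_zero]

theorem NormedSpace.map_exp_of_pow_eq_zero (𝕂 : Type*) {𝔸 𝔹 F : Type*} [Field 𝕂] [CharZero 𝕂]
    [Ring 𝔸] [Algebra 𝕂 𝔸] [TopologicalSpace 𝔸] [IsTopologicalRing 𝔸] [T2Space 𝔸]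
    [Ring 𝔹] [Algebra 𝕂 𝔹] [TopologicalSpace 𝔹] [IsTopologicalRing 𝔹] [T2Space 𝔹]
    [FunLike F 𝔸 𝔹] [AlgHomClass F 𝕂 𝔸 𝔹] (f : F) {x : 𝔸} {n : ℕ} (hx : x ^ n = 0) :
    f (NormedSpace.exp x) = NormedSpace.exp (f x) := by
  rw [NormedSpace.exp_eq_sum_range_of_pow_eq_zero 𝕂 hx,
    NormedSpace.exp_eq_sum_range_of_pow_eq_zero 𝕂 (by rw [← map_pow, hx, map_zero])]
  simp only [map_sum, map_smul, map_pow]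

namespace Matrix

variable {R : Type*} [CommRing R]

def strictLowerGeom (n : ℕ) (t : R) : Matrix (Fin n) (Fin n) R :=
  of fun i k => if k < i then t ^ ((i : ℕ) - k) else 0

def subdiagonal (n : ℕ) (t : R) : Matrix (Fin n) (Fin n) R :=
  of fun i k => if (i : ℕ) = k + 1 then t else 0

theorem strictLowerGeom_pow_succ_apply (n : ℕ) (t : R) (l : ℕ) (i k : Fin n) :
    (strictLowerGeom n t ^ (l + 1)) i k =
      if k < i then t ^ ((i : ℕ) - k) * (((i : ℕ) - k - 1).choose l : R) else 0 := by
  induction l generalizing i k with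
  | zero => simp [strictLowerGeom]
  | succ l ih =>
    set g : ℕ → R := fun m =>
      if m ∈ Ioo (k : ℕ) i then t ^ ((i : ℕ) - k) * ((m - k - 1).choose l : R) else 0
    have hsummand (m : Fin n) :
        strictLowerGeom n t i m * (strictLowerGeom n t ^ (l + 1)) m k = g m := by
      rw [ih]
      simp only [g, strictLowerGeom, of_apply, mem_Ioo, Fin.lt_def]
      by_cases hm : (k : ℕ) < m ∧ (m : ℕ) < i
      · rw [if_pos hm.2, if_pos hm.1, if_pos hm, ← mul_assoc, ← pow_add,
          Nat.sub_add_sub_cancel hm.2.le hm.1.le]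
      · rw [if_neg hm]
        split_ifs <;> first | omega | simp only [zero_mul, mul_zero]
    have hIoo : range n ∩ Ioo (k : ℕ) i = Ico ((k : ℕ) + 1) i := by
      rw [inter_eq_right.2 fun m hm => mem_range.2 ((mem_Ioo.1 hm).2.trans i.isLt)]; rfl
    have hshift (q : ℕ) : (k : ℕ) + 1 + q - k - 1 = q := by omega
    rw [pow_succ', mul_apply, Finset.sum_congr rfl fun m _ => hsummand m,
      Fin.sum_univ_eq_sum_range g, sum_ite_mem, hIoo, ← mul_sum, sum_Ico_eq_sum_range]
    simp_rw [hshift, ← Nat.cast_sum, Nat.sum_range_choose_eq_choose_add_one, Nat.sub_sub,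
      Fin.lt_def]
    split_ifs with hki
    · rfl
    · rw [Nat.sub_eq_zero_of_le (by omega), Nat.choose_eq_zero_of_lt (by omega), Nat.cast_zero,
        mul_zero]

theorem strictLowerGeom_pow_self (n : ℕ) (t : R) : strictLowerGeom n t ^ n = 0 := by
  cases n with
  | zero => exact Subsingleton.elim _ _
  | succ m =>
    ext i k
    rw [strictLowerGeom_pow_succ_apply, zero_apply]
    split_ifs
    · rw [Nat.choose_eq_zero_of_lt (by omega), Nat.cast_zero, mul_zero]
    · rfl

theorem strictLowerGeom_mul_subdiagonal (n : ℕ) (t : R) :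
    strictLowerGeom n t * subdiagonal n t = strictLowerGeom n t - subdiagonal n t := by
  ext i k
  set g : ℕ → R := fun m => if m = k + 1 then (if m < i then t ^ ((i : ℕ) - m) else 0) * t else 0
  have hsummand (m : Fin n) : strictLowerGeom n t i m * subdiagonal n t m k = g m := by
    simp only [g, strictLowerGeom, subdiagonal, of_apply, Fin.lt_def]
    split_ifs <;> simp only [mul_zero]
  rw [mul_apply, Finset.sum_congr rfl fun m _ => hsummand m, Fin.sum_univ_eq_sum_range g,
    sum_ite_eq', sub_apply]
  simp only [strictLowerGeom, subdiagonal, of_apply, mem_range, Fin.lt_def]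
  by_cases hki : (k : ℕ) + 1 < i
  · rw [if_pos (by omega), if_pos hki, if_pos (by omega), if_neg (by omega), sub_zero, ← pow_succ,
      Nat.sub_add_eq, Nat.sub_add_cancel (by omega)]
  · rw [if_neg hki, zero_mul, ite_self]
    rcases (show (i : ℕ) = k + 1 ∨ (i : ℕ) ≤ k by omega) with h | h
    · simp [h]
    · simp [show ¬ (k : ℕ) < i by omega, show (i : ℕ) ≠ k + 1 by omega]

theorem subdiagonal_mul_strictLowerGeom (n : ℕ) (t : R) :
    subdiagonal n t * strictLowerGeom n t = strictLowerGeom n t - subdiagonal n t := by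
  ext i k
  rw [mul_apply, sub_apply]
  simp only [strictLowerGeom, subdiagonal, of_apply, Fin.lt_def]
  rcases Nat.eq_zero_or_pos (i : ℕ) with hi | hi
  · simp [hi]
  set g : ℕ → R := fun m => if m = (i : ℕ) - 1 then t * (if (k : ℕ) < m then t ^ (m - k) else 0)
    else 0
  have hsummand (m : Fin n) : ((if (i : ℕ) = m + 1 then t else 0) *
      if (k : ℕ) < m then t ^ ((m : ℕ) - k) else 0) = g m := by
    simp only [g, show (i : ℕ) = m + 1 ↔ (m : ℕ) = i - 1 by omega]
    split_ifs <;> simp only [zero_mul]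
  rw [Finset.sum_congr rfl fun m _ => hsummand m, Fin.sum_univ_eq_sum_range g, sum_ite_eq',
    if_pos (mem_range.2 (by omega))]
  by_cases hki : (k : ℕ) + 1 < i
  · rw [if_pos (by omega), if_pos (by omega), if_neg (by omega), sub_zero, ← pow_succ',
      Nat.sub_right_comm, Nat.sub_add_cancel (by omega)]
  · rw [if_neg (by omega), mul_zero]
    rcases (show (i : ℕ) = k + 1 ∨ (i : ℕ) ≤ k by omega) with h | h
    · simp [h]
    · simp [show ¬ (k : ℕ) < i by omega, show (i : ℕ) ≠ k + 1 by omega]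

theorem strictLowerGeom_mul_one_sub_subdiagonal (n : ℕ) (t : R) :
    strictLowerGeom n t * (1 - subdiagonal n t) = subdiagonal n t := by
  rw [mul_sub, mul_one, strictLowerGeom_mul_subdiagonal, sub_sub_cancel]

theorem one_sub_subdiagonal_mul_one_add_strictLowerGeom (n : ℕ) (t : R) :
    (1 - subdiagonal n t) * (1 + strictLowerGeom n t) = 1 := by
  rw [sub_mul, one_mul, mul_add, mul_one, subdiagonal_mul_strictLowerGeom]
  abel

theorem subdiagonal_mulVec_zero {m : ℕ} (t : R) (u : Fin (m + 1) → R) :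
    (subdiagonal (m + 1) t *ᵥ u) 0 = 0 := by
  simp [subdiagonal, mulVec, dotProduct]

theorem subdiagonal_mulVec_succ {m : ℕ} (t : R) (u : Fin (m + 1) → R) (j : Fin m) :
    (subdiagonal (m + 1) t *ᵥ u) j.succ = t * u j.castSucc := by
  simp only [subdiagonal, mulVec, dotProduct, of_apply, Fin.val_succ, Nat.add_right_cancel_iff,
    ite_mul, zero_mul]
  rw [Finset.sum_eq_single j.castSucc (fun k _ hk => if_neg fun h => hk (Fin.ext h.symm))
    (by simp), if_pos (Fin.val_castSucc j).symm]

theorem norm_toEuclideanCLM_subdiagonal_le {𝕜 : Type*} [RCLike 𝕜] (n : ℕ) (t : 𝕜) :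
    ‖toEuclideanCLM (n := Fin n) (𝕜 := 𝕜) (subdiagonal n t)‖ ≤ ‖t‖ := by
  refine ContinuousLinearMap.opNorm_le_bound _ (norm_nonneg t) fun u => ?_
  rw [← pow_le_pow_iff_left₀ (norm_nonneg _) (by positivity) two_ne_zero, mul_pow,
    EuclideanSpace.norm_sq_eq, EuclideanSpace.norm_sq_eq]
  cases n with
  | zero => simp
  | succ m =>
    rw [Fin.sum_univ_succ, Fin.sum_univ_castSucc (fun i => ‖u.ofLp i‖ ^ 2), mul_add]
    simp only [ofLp_toEuclideanCLM, subdiagonal_mulVec_zero, subdiagonal_mulVec_succ, norm_zero,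
      norm_mul, mul_pow, ← mul_sum, zero_pow two_ne_zero, zero_add]
    exact le_add_of_nonneg_right (by positivity)

end Matrix

section

open RCLike
open scoped InnerProductSpace

variable {𝕜 E : Type*} [RCLike 𝕜] [NormedAddCommGroup E] [InnerProductSpace 𝕜 E]

theorem neg_div_mul_norm_sub_sq_le_re_inner {u w : E} {t : ℝ} (ht0 : 0 ≤ t) (ht1 : t ≤ 1)
    (hw : ‖w‖ ≤ t * ‖u‖) : -(t / (1 + t)) * ‖u - w‖ ^ 2 ≤ re ⟪w, u - w⟫_𝕜 := by
  have hr : -(‖w‖ * ‖u‖) ≤ re ⟪w, u⟫_𝕜 :=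
    neg_le_of_abs_le ((abs_re_le_norm _).trans (norm_inner_le_norm _ _))
  -- `t ‖u‖² - (1 - t) ‖w‖ ‖u‖ - ‖w‖² = (t ‖u‖ - ‖w‖) (‖u‖ + ‖w‖) ≥ 0`
  have key : 0 ≤ (1 - t) * re ⟪w, u⟫_𝕜 + t * ‖u‖ ^ 2 - ‖w‖ ^ 2 := by
    nlinarith [mul_nonneg (sub_nonneg.2 hw) (add_nonneg (norm_nonneg u) (norm_nonneg w))]
  have h1t : 0 < 1 + t := by linarith
  rw [@norm_sub_sq 𝕜, inner_re_symm, inner_sub_right, map_sub, inner_self_eq_norm_sq]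
  calc -(t / (1 + t)) * (‖u‖ ^ 2 - 2 * re ⟪w, u⟫_𝕜 + ‖w‖ ^ 2)
      = (re ⟪w, u⟫_𝕜 - ‖w‖ ^ 2) - ((1 - t) * re ⟪w, u⟫_𝕜 + t * ‖u‖ ^ 2 - ‖w‖ ^ 2) / (1 + t) := by
        field_simp
        ring
    _ ≤ re ⟪w, u⟫_𝕜 - ‖w‖ ^ 2 := sub_le_self _ (div_nonneg key h1t.le)

theorem neg_div_mul_norm_sq_le_re_inner_of_mul_one_sub_eq {K M : E →L[𝕜] E} {t : ℝ}
    (ht0 : 0 ≤ t) (ht1 : t ≤ 1) (hM : ‖M‖ ≤ t) (hKM : K * (1 - M) = M)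
    (hsurj : Function.Surjective ⇑(1 - M)) (v : E) :
    -(t / (1 + t)) * ‖v‖ ^ 2 ≤ re ⟪K v, v⟫_𝕜 := by
  obtain ⟨u, rfl⟩ := hsurj v
  have hKv : K ((1 - M) u) = M u := DFunLike.congr_fun hKM u
  have hMu : ‖M u‖ ≤ t * ‖u‖ := (M.le_opNorm u).trans (by gcongr)
  rw [hKv]
  simpa only [sub_apply, one_apply_eq_self] using
    neg_div_mul_norm_sub_sq_le_re_inner (𝕜 := 𝕜) ht0 ht1 hMu

variable [NormedSpace ℝ E] [IsScalarTower ℝ 𝕜 E] [CompleteSpace E]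

theorem hasDerivAt_exp_smul_apply (B : E →L[𝕜] E) (v : E) (s : ℝ) :
    HasDerivAt (fun s : ℝ => NormedSpace.exp ((s : 𝕜) • B) v)
      (B (NormedSpace.exp ((s : 𝕜) • B) v)) s := by
  have h := (ContinuousLinearMap.apply 𝕜 E v).hasFDerivAt.comp_hasDerivAt _
    (hasDerivAt_exp_smul_const' (𝕂 := 𝕜) B (s : 𝕜))
  simpa [Function.comp_def] using
    (h.hasFDerivAt.restrictScalars ℝ).comp_hasDerivAt s (ofRealCLM : ℝ →L[ℝ] 𝕜).hasDerivAt

theorem norm_exp_smul_le_of_re_inner_le {B : E →L[𝕜] E} {ω : ℝ}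
    (hB : ∀ u, re ⟪B u, u⟫_𝕜 ≤ ω * ‖u‖ ^ 2) {s : ℝ} (hs : 0 ≤ s) :
    ‖NormedSpace.exp ((s : 𝕜) • B)‖ ≤ Real.exp (ω * s) := by
  refine ContinuousLinearMap.opNorm_le_bound _ (Real.exp_pos _).le fun v => ?_
  set f : ℝ → E := fun s => NormedSpace.exp ((s : 𝕜) • B) v
  set ψ : ℝ → ℝ := fun s => Real.exp (-(2 * ω) * s) * ‖f s‖ ^ 2
  have hψ (s : ℝ) : HasDerivAt ψ
      (Real.exp (-(2 * ω) * s) * (2 * (re ⟪B (f s), f s⟫_𝕜 - ω * ‖f s‖ ^ 2))) s := by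
    have hf := hasDerivAt_exp_smul_apply B v s
    have hnorm : HasDerivAt (fun s => ‖f s‖ ^ 2) (2 * re ⟪B (f s), f s⟫_𝕜) s := by
      have h := (reCLM (K := 𝕜)).hasFDerivAt.comp_hasDerivAt s (hf.inner 𝕜 hf)
      simp only [Function.comp_def, reCLM_apply, inner_self_eq_norm_sq, map_add] at h
      exact h.congr_deriv (by rw [inner_re_symm]; ring)
    exact ((((hasDerivAt_id s).const_mul (-(2 * ω))).exp).mul hnorm).congr_deriv (by
      simp only [id]
      ring)
  have hanti : Antitone ψ := antitone_of_deriv_nonpos (fun s => (hψ s).differentiableAt)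
    fun s => (hψ s).deriv ▸ mul_nonpos_of_nonneg_of_nonpos (Real.exp_pos _).le
      (by linarith [hB (f s)])
  have hψ0 : ψ 0 = ‖v‖ ^ 2 := by simp [ψ, f]
  have hψs : Real.exp (-(2 * ω) * s) * ‖f s‖ ^ 2 ≤ ‖v‖ ^ 2 := hψ0 ▸ hanti hs
  rw [← pow_le_pow_iff_left₀ (norm_nonneg _) (by positivity) two_ne_zero]
  calc ‖f s‖ ^ 2 = Real.exp (2 * ω * s) * (Real.exp (-(2 * ω) * s) * ‖f s‖ ^ 2) := by
        rw [← mul_assoc, ← Real.exp_add, neg_mul, add_neg_cancel, Real.exp_zero, one_mul]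
    _ ≤ Real.exp (2 * ω * s) * ‖v‖ ^ 2 := by gcongr
    _ = (Real.exp (ω * s) * ‖v‖) ^ 2 := by rw [mul_pow, ← Real.exp_nat_mul]; ring_nf

end

open Matrix
open scoped InnerProductSpace

theorem singularValues_le_norm_toEuclideanCLM {n : ℕ} (A : Matrix (Fin n) (Fin n) ℂ) (i : Fin n) :
    singularValues A i ≤ ‖toEuclideanCLM (n := Fin n) (𝕜 := ℂ) A‖ := by
  set hH := isHermitian_conjTranspose_mul_self A
  set w := hH.eigenvectorBasis i
  have heig : hH.eigenvalues i = ‖toEuclideanCLM (n := Fin n) (𝕜 := ℂ) A w‖ ^ 2 := by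
    rw [hH.eigenvalues_eq i, ← mulVec_mulVec, dotProduct_mulVec, ← star_mulVec,
      dotProduct_comm, ← inner_self_eq_norm_sq (𝕜 := ℂ)]
    rfl
  rw [singularValues, heig, Real.sqrt_sq (norm_nonneg _)]
  simpa [w, hH.eigenvectorBasis.orthonormal.1 i] using
    (toEuclideanCLM (n := Fin n) (𝕜 := ℂ) A).le_opNorm w

theorem lagM1_eq_sum_range {j N : ℕ} (hj : j ≠ 0) (hjN : j ≤ N) (x : ℝ) :
    lagM1 j x =
      ∑ l ∈ Finset.range N, ((j - 1).choose l : ℝ) * (-x) ^ (l + 1) / (l + 1).factorial := by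
  rw [lagM1, if_neg hj, ← Finset.Ico_add_one_right_eq_Icc, Finset.sum_Ico_eq_sum_range,
    Nat.add_sub_cancel]
  simp_rw [add_comm 1, Nat.add_sub_cancel]
  refine Finset.sum_subset (Finset.range_subset_range.2 hjN) fun l _ hl => ?_
  rw [Nat.choose_eq_zero_of_lt (by simp at hl; omega)]
  simp

theorem exp_smul_strictLowerGeom_apply (x t : ℝ) {n : ℕ} (i k : Fin n) :
    NormedSpace.exp ((x : ℂ) • strictLowerGeom n (t : ℂ)) i k =
      ((if k < i then t ^ ((i : ℕ) - k) * lagM1 ((i : ℕ) - k) (-x) else if i = k then 1 else 0 :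
        ℝ) : ℂ) := by
  cases n with
  | zero => exact i.elim0
  | succ m =>
    rw [NormedSpace.exp_eq_sum_range_of_pow_eq_zero ℂ
      (by rw [smul_pow, strictLowerGeom_pow_self, smul_zero]), Finset.sum_range_succ']
    simp only [Matrix.add_apply, Matrix.sum_apply, Matrix.smul_apply, smul_pow, pow_zero,
      strictLowerGeom_pow_succ_apply, one_apply, smul_eq_mul]
    split_ifs with hki hik hik
    · exact absurd hik hki.ne'
    · rw [lagM1_eq_sum_range (N := m) (by omega) (by omega), Nat.factorial_zero, mul_zero, add_zero]
      push_cast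
      rw [mul_sum]
      refine sum_congr rfl fun l _ => ?_
      ring
    · simp
    · simp

theorem toepA_eq_smul_exp (lam : ℝ) {mu : ℝ} (hmu : 0 ≤ mu) (n : ℕ) :
    toepA lam mu n = (Real.sqrt lam : ℂ) •
      NormedSpace.exp ((Real.log lam : ℂ) • strictLowerGeom n (Real.sqrt mu : ℂ)) := by
  have hrpow (j : ℕ) : mu ^ ((j : ℝ) / 2) = Real.sqrt mu ^ j := by
    rw [Real.sqrt_eq_rpow, ← Real.rpow_natCast, ← Real.rpow_mul hmu, div_eq_inv_mul, one_div]
  ext i k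
  rw [Matrix.smul_apply, exp_smul_strictLowerGeom_apply, toepA, of_apply, aInt, smul_eq_mul,
    ← Complex.ofReal_mul]
  congr 1
  rcases lt_trichotomy k i with hki | rfl | hik
  · have hj : ((i : ℕ) : ℤ) - (k : ℕ) = (((i : ℕ) - k : ℕ) : ℤ) := by omega
    rw [hj, if_neg (by omega), if_pos hki, Int.toNat_natCast, Int.cast_natCast, hrpow, mul_assoc]
  · simp [lagM1]
  · rw [if_pos (by omega), if_neg (not_lt.2 hik.le), if_neg hik.ne, mul_zero]

theorem neg_div_mul_norm_sq_le_re_inner_strictLowerGeom {n : ℕ} {t : ℝ} (ht0 : 0 ≤ t)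
    (ht1 : t ≤ 1) (v : EuclideanSpace ℂ (Fin n)) :
    -(t / (1 + t)) * ‖v‖ ^ 2 ≤
      RCLike.re ⟪toEuclideanCLM (n := Fin n) (𝕜 := ℂ) (strictLowerGeom n (t : ℂ)) v, v⟫_ℂ := by
  set Φ := toEuclideanCLM (n := Fin n) (𝕜 := ℂ)
  refine neg_div_mul_norm_sq_le_re_inner_of_mul_one_sub_eq (M := Φ (subdiagonal n (t : ℂ)))
    ht0 ht1 ?_ ?_ (fun v => ⟨(1 + Φ (strictLowerGeom n (t : ℂ))) v, ?_⟩) v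
  · simpa [abs_of_nonneg ht0] using norm_toEuclideanCLM_subdiagonal_le n (t : ℂ)
  · rw [← map_one Φ, ← map_sub, ← map_mul, strictLowerGeom_mul_one_sub_subdiagonal]
  · rw [← mul_apply_eq_comp, ← map_one Φ, ← map_sub, ← map_add, ← map_mul,
      one_sub_subdiagonal_mul_one_add_strictLowerGeom, map_one, one_apply_eq_self]

theorem norm_toEuclideanCLM_toepA_le {lam mu : ℝ} (hlam0 : 0 ≤ lam) (hlam1 : lam ≤ 1)
    (hmu0 : 0 ≤ mu) (hmu1 : mu ≤ 1) (n : ℕ) :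
    ‖toEuclideanCLM (n := Fin n) (𝕜 := ℂ) (toepA lam mu n)‖ ≤
      Real.sqrt lam * Real.exp (Real.sqrt mu / (1 + Real.sqrt mu) * -Real.log lam) := by
  set K := toEuclideanCLM (n := Fin n) (𝕜 := ℂ) (strictLowerGeom n (Real.sqrt mu : ℂ))
  have hexp := norm_exp_smul_le_of_re_inner_le (B := -K)
    (fun u => by simpa using neg_le_neg (neg_div_mul_norm_sq_le_re_inner_strictLowerGeom
      (Real.sqrt_nonneg mu) (Real.sqrt_le_one.2 hmu1) u))
    (neg_nonneg.2 (Real.log_nonpos hlam0 hlam1))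
  rw [RCLike.ofReal_neg, neg_smul_neg] at hexp
  rw [toepA_eq_smul_exp lam hmu0, map_smul, NormedSpace.map_exp_of_pow_eq_zero ℂ _
    (by rw [smul_pow, strictLowerGeom_pow_self, smul_zero]), map_smul, norm_smul,
    Complex.norm_real, Real.norm_of_nonneg (Real.sqrt_nonneg _)]
  exact mul_le_mul_of_nonneg_left hexp (Real.sqrt_nonneg _)

/-- Every singular value `s` of the Toeplitz matrix `T^{(n)}` built from the
sequence `a^{(λ,μ)}` satisfies `s² ≤ λ^{(1-√μ)/(1+√μ)}`. -/
theorem toepA_singularValues_sq_bound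
    (lam mu : ℝ) (hlam : lam ∈ Set.Ioo (0:ℝ) 1) (hmu : mu ∈ Set.Ioo (0:ℝ) 1) (n : ℕ) :
    ∀ i : Fin n, (singularValues (toepA lam mu n) i) ^ 2
      ≤ lam ^ ((1 - Real.sqrt mu) / (1 + Real.sqrt mu)) := by
  intro i
  have h1t : 1 + Real.sqrt mu ≠ 0 := by positivity
  calc singularValues (toepA lam mu n) i ^ 2
      ≤ ‖toEuclideanCLM (n := Fin n) (𝕜 := ℂ) (toepA lam mu n)‖ ^ 2 :=
        pow_le_pow_left₀ (Real.sqrt_nonneg _) (singularValues_le_norm_toEuclideanCLM _ i) 2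
    _ ≤ (Real.sqrt lam * Real.exp (Real.sqrt mu / (1 + Real.sqrt mu) * -Real.log lam)) ^ 2 := by
        gcongr
        exact norm_toEuclideanCLM_toepA_le hlam.1.le hlam.2.le hmu.1.le hmu.2.le n
    _ = lam ^ ((1 - Real.sqrt mu) / (1 + Real.sqrt mu)) := by
        rw [sq_sqrt_mul_exp_mul_neg_log hlam.1]
        congr 1
        field_simp
        ring
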